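/- The independent lower bound: the total distance of any feasible TTP-2 schedule for n teams is at least LB = 2·D_G + n·D_M. -/

import Mathlib

open Finset

/-- Feasibility of a TTP-2 schedule given by opponent and home/away functions. -/
def ttpFeasible (n : ℕ) (opp : Fin (2*(n-1)) → Fin n → Fin n)
    (loc : Fin (2*(n-1)) → Fin n → Bool) : Prop :=
  (∀ d i, opp d i ≠ i) ∧
  (∀ d i, opp d (opp d i) = i) ∧
  (∀ d i, loc d (opp d i) = !(loc d i)) ∧
  (∀ i j : Fin n, i ≠ j → ∃! d : Fin (2*(n-1)), opp d i = j ∧ loc d i = false) ∧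
  (∀ (d : ℕ) (hd : d + 1 < 2*(n-1)) (i : Fin n),
      opp ⟨d+1, hd⟩ i ≠ opp ⟨d, by omega⟩ i) ∧
  (∀ (d : ℕ) (hd : d + 2 < 2*(n-1)) (i : Fin n),
      ¬(loc ⟨d+1, by omega⟩ i = loc ⟨d, by omega⟩ i ∧
        loc ⟨d+2, hd⟩ i = loc ⟨d+1, by omega⟩ i))

/-- The venue of team `i` on day `d` (days indexed by naturals; out-of-range
days, which never occur below, default to home). -/
def ttpVen (n : ℕ) (opp : Fin (2*(n-1)) → Fin n → Fin n)
    (loc : Fin (2*(n-1)) → Fin n → Bool) (d : ℕ) (i : Fin n) : Fin n :=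
  if h : d < 2*(n-1) then (if loc ⟨d, h⟩ i then i else opp ⟨d, h⟩ i) else i

/-- The travel distance of team `i` in a schedule. -/
noncomputable def ttpTravel (n : ℕ) (D : Fin n → Fin n → ℝ)
    (opp : Fin (2*(n-1)) → Fin n → Fin n)
    (loc : Fin (2*(n-1)) → Fin n → Bool) (i : Fin n) : ℝ :=
  D i (ttpVen n opp loc 0 i)
  + ∑ d ∈ Finset.range (2*(n-1) - 1),
      D (ttpVen n opp loc d i) (ttpVen n opp loc (d+1) i)
  + D (ttpVen n opp loc (2*(n-1) - 1) i) i

/-- The total distance of a schedule. -/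
noncomputable def ttpTotal (n : ℕ) (D : Fin n → Fin n → ℝ)
    (opp : Fin (2*(n-1)) → Fin n → Fin n)
    (loc : Fin (2*(n-1)) → Fin n → Bool) : ℝ :=
  ∑ i : Fin n, ttpTravel n D opp loc i

/-- A pairing (perfect matching) of the `n` teams: a family of blocks of size 2
covering every team exactly once. -/
def isPairing (n : ℕ) (M : Finset (Finset (Fin n))) : Prop :=
  (∀ e ∈ M, e.card = 2) ∧ (∀ i : Fin n, ∃! e, e ∈ M ∧ i ∈ e)

/-- The weight `D a b` of a block `{a, b}` (written symmetrically). -/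
noncomputable def blockWeight (n : ℕ) (D : Fin n → Fin n → ℝ)
    (f : Finset (Fin n)) : ℝ :=
  (∑ a ∈ f, ∑ b ∈ f, D a b) / 2

/-- The weight of a pairing: the sum of `D a b` over its blocks `{a, b}`. -/
noncomputable def pairingWeight (n : ℕ) (D : Fin n → Fin n → ℝ)
    (M : Finset (Finset (Fin n))) : ℝ :=
  ∑ e ∈ M, blockWeight n D e

/-- `D_G`: the sum of `D i j` over all unordered pairs of distinct teams. -/
noncomputable def sumDG (n : ℕ) (D : Fin n → Fin n → ℝ) : ℝ :=
  (∑ i : Fin n, ∑ j ∈ Finset.univ.erase i, D i j) / 2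

/-- `D_i`: the sum of `D i j` over all `j ≠ i`. -/
noncomputable def sumDi (n : ℕ) (D : Fin n → Fin n → ℝ) (i : Fin n) : ℝ :=
  ∑ j ∈ Finset.univ.erase i, D i j

/-- The distance matrix axioms: zero diagonal, nonnegativity, symmetry and the
triangle inequality. -/
def isMetric (n : ℕ) (D : Fin n → Fin n → ℝ) : Prop :=
  (∀ i, D i i = 0) ∧ (∀ i j, 0 ≤ D i j) ∧ (∀ i j, D i j = D j i) ∧
  (∀ i j h, D i j ≤ D i h + D h j)

/-- A TTP-2 itinerary pattern for team `i`: a partition of the set of the other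
teams into blocks of size 1 or 2. -/
def isPattern (n : ℕ) (i : Fin n) (P : Finset (Finset (Fin n))) : Prop :=
  (∀ e ∈ P, e.card = 1 ∨ e.card = 2) ∧
  (∀ e ∈ P, i ∉ e) ∧
  (∀ j : Fin n, j ≠ i → ∃! e, e ∈ P ∧ j ∈ e)

/-- The cost of an itinerary pattern: `2 * D i a` for a singleton block `{a}`,
and `D i a + D a b + D b i` for a block `{a, b}` of size 2. -/
noncomputable def patternCost (n : ℕ) (D : Fin n → Fin n → ℝ) (i : Fin n)
    (P : Finset (Finset (Fin n))) : ℝ :=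
  ∑ e ∈ P, ((∑ a ∈ e, D i a) +
    if e.card = 1 then ∑ a ∈ e, D i a else blockWeight n D e)

/-- `D(e, f)`: the sum of `D a b` over `a ∈ e` and `b ∈ f`. -/
noncomputable def crossDist (n : ℕ) (D : Fin n → Fin n → ℝ)
    (e f : Finset (Fin n)) : ℝ :=
  ∑ a ∈ e, ∑ b ∈ f, D a b

/-!
Each season of team `i` splits into away trips visiting one or two opponents, and every other
team is visited exactly once; legs from home to home cost nothing. So team
`i` travels at least `2 D(i,a)` for each singly visited `a` plus `D(i,a) + D(a,b) + D(b,i)` for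
each trip to `a, b`. This is `D_i` plus the weight of a pairing: keep the trips `{a, b}` and pair
off `i` with the singly visited teams arbitrarily, a pair `{a, b}` weighing at most
`D(i,a) + D(i,b)` by the triangle inequality. Hence every team travels at least `D_i + D_M`, and
`Σ_i D_i = 2 D_G`.
-/

section BlockPartition

variable {α : Type*}

def IsBlockPartition (S : Finset α) (P : Finset (Finset α)) : Prop :=
  (∀ e ∈ P, e ⊆ S) ∧ ∀ a ∈ S, ∃! e, e ∈ P ∧ a ∈ e

namespace IsBlockPartition

variable {S T : Finset α} {P Q : Finset (Finset α)}

theorem pairwiseDisjoint (h : IsBlockPartition S P) :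
    (P : Set (Finset α)).PairwiseDisjoint id := by
  intro e he f hf hef
  refine Finset.disjoint_left.mpr fun a hae haf => hef ?_
  obtain ⟨g, -, hg⟩ := h.2 a (h.1 e he hae)
  exact (hg e ⟨he, hae⟩).trans (hg f ⟨hf, haf⟩).symm

variable [DecidableEq α]

theorem biUnion_eq (h : IsBlockPartition S P) : P.biUnion id = S := by
  ext a
  simp only [mem_biUnion, id]
  refine ⟨fun ⟨e, he, hae⟩ => h.1 e he hae, fun ha => ?_⟩
  obtain ⟨e, he, -⟩ := h.2 a ha
  exact ⟨e, he⟩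

theorem sum_sum {β : Type*} [AddCommMonoid β] (h : IsBlockPartition S P) (f : α → β) :
    ∑ e ∈ P, ∑ a ∈ e, f a = ∑ a ∈ S, f a := by
  rw [← h.biUnion_eq, sum_biUnion h.pairwiseDisjoint]
  rfl

theorem of_pairwiseDisjoint (hP : (P : Set (Finset α)).PairwiseDisjoint id) :
    IsBlockPartition (P.biUnion id) P := by
  refine ⟨fun e he => subset_biUnion_of_mem id he, fun a ha => ?_⟩
  obtain ⟨e, he, hae⟩ := mem_biUnion.mp ha
  refine ⟨e, ⟨he, hae⟩, fun f ⟨hf, haf⟩ => ?_⟩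
  by_contra hfe
  exact Finset.disjoint_left.mp (hP hf he hfe) haf hae

theorem union (hP : IsBlockPartition S P) (hQ : IsBlockPartition T Q) (hST : Disjoint S T) :
    IsBlockPartition (S ∪ T) (P ∪ Q) := by
  have notMem_left : ∀ a ∈ T, ∀ e ∈ P, a ∉ e := fun a ha e he hae =>
    Finset.disjoint_left.mp hST (hP.1 e he hae) ha
  have notMem_right : ∀ a ∈ S, ∀ e ∈ Q, a ∉ e := fun a ha e he hae =>
    Finset.disjoint_left.mp hST ha (hQ.1 e he hae)
  refine ⟨fun e he => ?_, fun a ha => ?_⟩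
  · rcases mem_union.mp he with he | he
    exacts [(hP.1 e he).trans subset_union_left, (hQ.1 e he).trans subset_union_right]
  · rcases mem_union.mp ha with ha | ha
    · obtain ⟨e, ⟨he, hae⟩, huniq⟩ := hP.2 a ha
      refine ⟨e, ⟨mem_union_left Q he, hae⟩, fun f ⟨hf, haf⟩ => ?_⟩
      rcases mem_union.mp hf with hf | hf
      exacts [huniq f ⟨hf, haf⟩, absurd haf (notMem_right a ha f hf)]
    · obtain ⟨e, ⟨he, hae⟩, huniq⟩ := hQ.2 a ha
      refine ⟨e, ⟨mem_union_right P he, hae⟩, fun f ⟨hf, haf⟩ => ?_⟩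
      rcases mem_union.mp hf with hf | hf
      exacts [absurd haf (notMem_left a ha f hf), huniq f ⟨hf, haf⟩]

end IsBlockPartition

theorem exists_isBlockPartition_card_eq_two [DecidableEq α] (S : Finset α) (hS : Even S.card) :
    ∃ Q : Finset (Finset α), (∀ e ∈ Q, e.card = 2) ∧ IsBlockPartition S Q := by
  obtain ⟨k, hk⟩ := hS
  induction k generalizing S with
  | zero =>
    refine ⟨∅, by simp, by simp, fun a ha => ?_⟩
    simp [card_eq_zero.mp hk] at ha
  | succ k ih =>
    obtain ⟨a, ha, b, hb, hab⟩ := one_lt_card.mp (by omega : 1 < S.card)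
    have hsub : {a, b} ⊆ S := insert_subset ha (singleton_subset_iff.mpr hb)
    have hpair : ({a, b} : Finset α).card = 2 := card_pair hab
    obtain ⟨Q, hQ2, hQ⟩ := ih (S \ {a, b}) (by rw [card_sdiff_of_subset hsub]; omega)
    have hab_part : IsBlockPartition {a, b} {{a, b}} :=
      ⟨by simp, fun x hx => ⟨{a, b}, by simpa using hx, by simp⟩⟩
    refine ⟨{{a, b}} ∪ Q, ?_, ?_⟩
    · simpa [hpair] using hQ2
    · simpa [union_sdiff_of_subset hsub] using hab_part.union hQ disjoint_sdiff

end BlockPartition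

section Pairing

variable {n : ℕ} {D : Fin n → Fin n → ℝ}

theorem blockWeight_pair (hD : isMetric n D) {a b : Fin n} (hab : a ≠ b) :
    blockWeight n D {a, b} = D a b := by
  obtain ⟨hzero, -, hsymm, -⟩ := hD
  simp only [blockWeight, sum_pair hab, hzero, hsymm b a]
  ring

theorem blockWeight_nonneg (hD : isMetric n D) (e : Finset (Fin n)) : 0 ≤ blockWeight n D e :=
  div_nonneg (sum_nonneg fun a _ => sum_nonneg fun b _ => hD.2.1 a b) zero_le_two

theorem blockWeight_le_sum (hD : isMetric n D) (i : Fin n) {e : Finset (Fin n)}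
    (he : e.card = 2) : blockWeight n D e ≤ ∑ a ∈ e, D i a := by
  obtain ⟨a, b, hab, rfl⟩ := card_eq_two.mp he
  rw [blockWeight_pair hD hab, sum_pair hab, hD.2.2.1 i a]
  exact hD.2.2.2 a b i

theorem isPattern.isBlockPartition {i : Fin n} {P : Finset (Finset (Fin n))}
    (hP : isPattern n i P) : IsBlockPartition (univ.erase i) P :=
  ⟨fun e he a hae => mem_erase.mpr ⟨fun hai => hP.2.1 e he (hai ▸ hae), mem_univ a⟩,
    fun a ha => hP.2.2 a (ne_of_mem_erase ha)⟩

theorem exists_isPairing_sumDi_add_pairingWeight_le (hne : Even n) (hD : isMetric n D)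
    {i : Fin n} {P : Finset (Finset (Fin n))} (hP : isPattern n i P) :
    ∃ M, isPairing n M ∧ sumDi n D i + pairingWeight n D M ≤ patternCost n D i P := by
  have hPpart := hP.isBlockPartition
  set P₁ := P.filter fun e => e.card = 1
  set P₂ := P.filter fun e => ¬ e.card = 1
  set U := P₂.biUnion id
  have hP₂card : ∀ e ∈ P₂, e.card = 2 := fun e he =>
    (hP.1 e (mem_filter.mp he).1).resolve_left (mem_filter.mp he).2
  have hP₂ : IsBlockPartition U P₂ := .of_pairwiseDisjoint
    (hPpart.pairwiseDisjoint.subset (coe_subset.mpr (filter_subset _ _)))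
  have hUcard : U.card = 2 * P₂.card := by
    rw [mul_comm, ← sum_const_nat hP₂card, card_eq_sum_ones, ← hP₂.sum_sum]
    simp
  have hUle : U.card ≤ n := by simpa using card_le_univ U
  obtain ⟨Q, hQ2, hQ⟩ := exists_isBlockPartition_card_eq_two (univ \ U) (by
    rw [card_univ_sdiff, Fintype.card_fin, hUcard]
    exact (Nat.even_sub (by omega)).mpr (by simp [hne]))
  refine ⟨P₂ ∪ Q, ⟨fun e he => ?_, fun a => ?_⟩, ?_⟩
  · rcases mem_union.mp he with he | he
    exacts [hP₂card e he, hQ2 e he]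
  · simpa using (hP₂.union hQ disjoint_sdiff).2 a (by simp)
  · have hweight : pairingWeight n D (P₂ ∪ Q) ≤
        ∑ e ∈ P₂, blockWeight n D e + ∑ a ∈ univ \ U, D i a := by
      rw [pairingWeight, ← hQ.sum_sum]
      have hunion := sum_union_inter (s₁ := P₂) (s₂ := Q) (f := blockWeight n D)
      have hinter := sum_nonneg fun e (_ : e ∈ P₂ ∩ Q) => blockWeight_nonneg hD e
      have hQ := sum_le_sum fun e he => blockWeight_le_sum hD i (hQ2 e he)
      linarith
    have hcost : patternCost n D i P = sumDi n D i + ∑ e ∈ P₁, ∑ a ∈ e, D i a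
        + ∑ e ∈ P₂, blockWeight n D e := by
      rw [patternCost, sum_add_distrib, hPpart.sum_sum, sumDi, add_assoc,
        ← sum_filter_add_sum_filter_not P fun e => e.card = 1]
      congr 2
      exacts [sum_congr rfl fun e he => if_pos (mem_filter.mp he).2,
        sum_congr rfl fun e he => if_neg (mem_filter.mp he).2]
    have hsplit : ∑ a ∈ univ \ U, D i a = ∑ e ∈ P₁, ∑ a ∈ e, D i a := by
      have hU := sum_sdiff (subset_univ U) (f := D i)
      have hi := add_sum_erase univ (D i) (mem_univ i)
      have hP₁₂ := sum_filter_add_sum_filter_not P (·.card = 1) fun e => ∑ a ∈ e, D i a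
      rw [hP₂.sum_sum, hPpart.sum_sum] at hP₁₂
      linarith [hD.1 i]
    linarith

end Pairing

namespace TTP

variable {n : ℕ}

/-- Days past the end of the season count as home days. -/
def atHome (loc : Fin (2*(n-1)) → Fin n → Bool) (i : Fin n) (d : ℕ) : Bool :=
  if h : d < 2*(n-1) then loc ⟨d, h⟩ i else true

def oppOn (opp : Fin (2*(n-1)) → Fin n → Fin n) (i : Fin n) (d : ℕ) : Fin n :=
  if h : d < 2*(n-1) then opp ⟨d, h⟩ i else i

/-- Where team `i` is before its game of day `d`. -/
def position (opp : Fin (2*(n-1)) → Fin n → Fin n) (loc : Fin (2*(n-1)) → Fin n → Bool)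
    (i : Fin n) : ℕ → Fin n
  | 0 => i
  | d + 1 => ttpVen n opp loc d i

noncomputable def leg (D : Fin n → Fin n → ℝ) (opp : Fin (2*(n-1)) → Fin n → Fin n)
    (loc : Fin (2*(n-1)) → Fin n → Bool) (i : Fin n) (d : ℕ) : ℝ :=
  D (position opp loc i d) (position opp loc i (d + 1))

def tripStarts (loc : Fin (2*(n-1)) → Fin n → Bool) (i : Fin n) : Finset ℕ :=
  (range (2*(n-1))).filter fun s =>
    atHome loc i s = false ∧ (s = 0 ∨ atHome loc i (s - 1) = true)

/-- The number of away games of the trip starting on day `s`, for a schedule bounded by 2. -/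
def tripLength (loc : Fin (2*(n-1)) → Fin n → Bool) (i : Fin n) (s : ℕ) : ℕ :=
  if atHome loc i (s + 1) then 1 else 2

def tripOpponents (opp : Fin (2*(n-1)) → Fin n → Fin n) (loc : Fin (2*(n-1)) → Fin n → Bool)
    (i : Fin n) (s : ℕ) : Finset (Fin n) :=
  (Ico s (s + tripLength loc i s)).image (oppOn opp i)

def tripPattern (opp : Fin (2*(n-1)) → Fin n → Fin n) (loc : Fin (2*(n-1)) → Fin n → Bool)
    (i : Fin n) : Finset (Finset (Fin n)) :=
  (tripStarts loc i).image (tripOpponents opp loc i)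

variable {D : Fin n → Fin n → ℝ} {opp : Fin (2*(n-1)) → Fin n → Fin n}
  {loc : Fin (2*(n-1)) → Fin n → Bool} {i : Fin n} {d s : ℕ}

theorem lt_of_atHome_eq_false (h : atHome loc i d = false) : d < 2*(n-1) := by
  by_contra hd
  simp [atHome, hd] at h

theorem ttpVen_eq : ttpVen n opp loc d i = if atHome loc i d then i else oppOn opp i d := by
  unfold ttpVen atHome oppOn
  split_ifs <;> simp_all

theorem position_succ_of_atHome (h : atHome loc i d = true) : position opp loc i (d + 1) = i := by
  simp [position, ttpVen_eq, h]

theorem position_succ_of_away (h : atHome loc i d = false) :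
    position opp loc i (d + 1) = oppOn opp i d := by
  simp [position, ttpVen_eq, h]

theorem ttpTravel_eq_sum_leg (hn : 2 ≤ n) :
    ttpTravel n D opp loc i = ∑ d ∈ range (2*(n-1) + 1), leg D opp loc i d := by
  obtain ⟨m, hm⟩ : ∃ m, 2*(n-1) = m + 1 := ⟨2*(n-1) - 1, by omega⟩
  have hend : ttpVen n opp loc (m + 1) i = i := by
    rw [ttpVen, dif_neg (by omega)]
  rw [ttpTravel, hm, sum_range_succ', sum_range_succ, Nat.add_sub_cancel]
  simp only [leg, position, hend]
  ring

theorem oppOn_ne_self (hfeas : ttpFeasible n opp loc) (h : atHome loc i d = false) :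
    oppOn opp i d ≠ i := by
  obtain ⟨hself, -⟩ := hfeas
  rw [oppOn, dif_pos (lt_of_atHome_eq_false h)]
  exact hself _ i

theorem oppOn_succ_ne (hfeas : ttpFeasible n opp loc) (h : atHome loc i (d + 1) = false) :
    oppOn opp i (d + 1) ≠ oppOn opp i d := by
  obtain ⟨-, -, -, -, hnorepeat, -⟩ := hfeas
  have hd := lt_of_atHome_eq_false h
  rw [oppOn, oppOn, dif_pos hd, dif_pos (by omega)]
  exact hnorepeat d hd i

theorem atHome_add_two (hfeas : ttpFeasible n opp loc) (h₀ : atHome loc i d = false)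
    (h₁ : atHome loc i (d + 1) = false) : atHome loc i (d + 2) = true := by
  obtain ⟨-, -, -, -, -, hbounded⟩ := hfeas
  have hd := lt_of_atHome_eq_false h₁
  unfold atHome at *
  split_ifs with h₂
  · rw [dif_pos hd] at h₁
    rw [dif_pos (by omega)] at h₀
    by_contra h
    exact hbounded d h₂ i ⟨h₁.trans h₀.symm, (Bool.eq_false_iff.mpr h).trans h₁.symm⟩
  · rfl

theorem eq_of_oppOn_eq (hfeas : ttpFeasible n opp loc) {d' : ℕ} (h : atHome loc i d = false)
    (h' : atHome loc i d' = false) (hopp : oppOn opp i d = oppOn opp i d') : d = d' := by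
  obtain ⟨hself, -, -, haway, -⟩ := hfeas
  have hd := lt_of_atHome_eq_false h
  have hd' := lt_of_atHome_eq_false h'
  simp only [atHome, oppOn, dif_pos hd, dif_pos hd'] at h h' hopp
  obtain ⟨day, -, huniq⟩ := haway i _ (hself ⟨d, hd⟩ i).symm
  exact congrArg Fin.val
    ((huniq ⟨d, hd⟩ ⟨rfl, h⟩).trans (huniq ⟨d', hd'⟩ ⟨hopp.symm, h'⟩).symm)

theorem exists_atHome_eq_false_oppOn_eq (hfeas : ttpFeasible n opp loc) {j : Fin n}
    (hj : j ≠ i) : ∃ d, atHome loc i d = false ∧ oppOn opp i d = j := by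
  obtain ⟨-, -, -, haway, -⟩ := hfeas
  obtain ⟨d, ⟨hopp, hloc⟩, -⟩ := haway i j hj.symm
  exact ⟨d, by simpa [atHome] using hloc, by simpa [oppOn] using hopp⟩

theorem mem_tripStarts : s ∈ tripStarts loc i ↔
    atHome loc i s = false ∧ (s = 0 ∨ atHome loc i (s - 1) = true) := by
  rw [tripStarts, mem_filter, mem_range, and_iff_right_iff_imp]
  exact fun h => lt_of_atHome_eq_false h.1

theorem position_of_mem_tripStarts (hs : s ∈ tripStarts loc i) : position opp loc i s = i := by
  cases s with
  | zero => rfl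
  | succ d => exact position_succ_of_atHome (by simpa using (mem_tripStarts.mp hs).2)

theorem one_le_tripLength (loc : Fin (2*(n-1)) → Fin n → Bool) (i : Fin n) (s : ℕ) :
    1 ≤ tripLength loc i s := by
  unfold tripLength
  split_ifs <;> omega

theorem atHome_eq_false_of_mem_trip (hs : s ∈ tripStarts loc i)
    (hd : d ∈ Ico s (s + tripLength loc i s)) : atHome loc i d = false := by
  rw [tripLength] at hd
  split_ifs at hd with h <;> rw [mem_Ico] at hd
  · obtain rfl : d = s := by omega
    exact (mem_tripStarts.mp hs).1
  · obtain rfl | rfl : d = s ∨ d = s + 1 := by omega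
    exacts [(mem_tripStarts.mp hs).1, Bool.eq_false_iff.mpr h]

/-- A trip begins only after a home day, so it cannot begin during an earlier trip. -/
theorem add_tripLength_lt {s' : ℕ} (hs : s ∈ tripStarts loc i) (hs' : s' ∈ tripStarts loc i)
    (hlt : s < s') : s + tripLength loc i s < s' := by
  by_contra hle
  rcases (mem_tripStarts.mp hs').2 with h | h
  · omega
  · have := atHome_eq_false_of_mem_trip hs (d := s' - 1) (mem_Ico.mpr ⟨by omega, by omega⟩)
    simp_all

theorem add_tripLength_le (hs : s ∈ tripStarts loc i) : s + tripLength loc i s ≤ 2*(n-1) := by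
  have hlen := one_le_tripLength loc i s
  have := lt_of_atHome_eq_false <| atHome_eq_false_of_mem_trip hs
    (d := s + tripLength loc i s - 1) (mem_Ico.mpr ⟨by omega, by omega⟩)
  omega

theorem eq_of_mem_trip_legs {s' : ℕ} (hs : s ∈ tripStarts loc i) (hs' : s' ∈ tripStarts loc i)
    (hd : d ∈ Icc s (s + tripLength loc i s)) (hd' : d ∈ Icc s' (s' + tripLength loc i s')) :
    s = s' := by
  rw [mem_Icc] at hd hd'
  rcases lt_trichotomy s s' with hlt | heq | hlt
  · have := add_tripLength_lt hs hs' hlt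
    omega
  · exact heq
  · have := add_tripLength_lt hs' hs hlt
    omega

theorem exists_mem_tripStarts (hfeas : ttpFeasible n opp loc) (h : atHome loc i d = false) :
    ∃ s ∈ tripStarts loc i, d ∈ Ico s (s + tripLength loc i s) := by
  by_cases hstart : d = 0 ∨ atHome loc i (d - 1) = true
  · exact ⟨d, mem_tripStarts.mpr ⟨h, hstart⟩,
      mem_Ico.mpr ⟨le_rfl, Nat.lt_add_of_pos_right (one_le_tripLength loc i d)⟩⟩
  · rw [not_or] at hstart
    obtain ⟨s, rfl⟩ : ∃ s, d = s + 1 := ⟨d - 1, by omega⟩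
    have hs : atHome loc i s = false := by simpa using hstart.2
    refine ⟨s, mem_tripStarts.mpr ⟨hs, ?_⟩, by simp [tripLength, h]⟩
    by_contra hprev
    rw [not_or] at hprev
    obtain ⟨r, rfl⟩ : ∃ r, s = r + 1 := ⟨s - 1, by omega⟩
    have := atHome_add_two hfeas (by simpa using hprev.2) hs
    simp_all

theorem tripOpponents_eq : tripOpponents opp loc i s =
    if atHome loc i (s + 1) then {oppOn opp i s} else {oppOn opp i s, oppOn opp i (s + 1)} := by
  unfold tripOpponents tripLength
  split_ifs
  · simp
  · rw [show Ico s (s + 2) = {s, s + 1} by ext; simp; omega, image_insert, image_singleton]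

theorem oppOn_mem_tripOpponents : oppOn opp i s ∈ tripOpponents opp loc i s :=
  mem_image_of_mem _ (mem_Ico.mpr ⟨le_rfl, Nat.lt_add_of_pos_right (one_le_tripLength loc i s)⟩)

theorem eq_of_mem_tripOpponents (hfeas : ttpFeasible n opp loc) {s' : ℕ} {j : Fin n}
    (hs : s ∈ tripStarts loc i) (hs' : s' ∈ tripStarts loc i)
    (hj : j ∈ tripOpponents opp loc i s) (hj' : j ∈ tripOpponents opp loc i s') : s = s' := by
  obtain ⟨d, hd, rfl⟩ := mem_image.mp hj
  obtain ⟨d', hd', hdd'⟩ := mem_image.mp hj'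
  obtain rfl := eq_of_oppOn_eq hfeas (atHome_eq_false_of_mem_trip hs hd)
    (atHome_eq_false_of_mem_trip hs' hd') hdd'.symm
  exact eq_of_mem_trip_legs hs hs' (Ico_subset_Icc_self hd) (Ico_subset_Icc_self hd')

theorem isPattern_tripPattern (hfeas : ttpFeasible n opp loc) :
    isPattern n i (tripPattern opp loc i) := by
  refine ⟨fun e he => ?_, fun e he hi => ?_, fun j hj => ?_⟩
  · obtain ⟨s, hs, rfl⟩ := mem_image.mp he
    rw [tripOpponents_eq]
    split_ifs with h
    · exact Or.inl (card_singleton _)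
    · exact Or.inr (card_pair (oppOn_succ_ne hfeas (Bool.eq_false_iff.mpr h)).symm)
  · obtain ⟨s, hs, rfl⟩ := mem_image.mp he
    obtain ⟨d, hd, hdi⟩ := mem_image.mp hi
    exact oppOn_ne_self hfeas (atHome_eq_false_of_mem_trip hs hd) hdi
  · obtain ⟨d, hd, rfl⟩ := exists_atHome_eq_false_oppOn_eq hfeas hj
    obtain ⟨s, hs, hds⟩ := exists_mem_tripStarts hfeas hd
    have hmem : oppOn opp i d ∈ tripOpponents opp loc i s := mem_image_of_mem _ hds
    refine ⟨_, ⟨mem_image_of_mem _ hs, hmem⟩, fun e ⟨he, hje⟩ => ?_⟩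
    obtain ⟨s', hs', rfl⟩ := mem_image.mp he
    rw [eq_of_mem_tripOpponents hfeas hs' hs hje hmem]

theorem tripCost_eq_sum_leg (hfeas : ttpFeasible n opp loc) (hD : isMetric n D)
    (hs : s ∈ tripStarts loc i) :
    ((∑ a ∈ tripOpponents opp loc i s, D i a) +
      if (tripOpponents opp loc i s).card = 1 then ∑ a ∈ tripOpponents opp loc i s, D i a
      else blockWeight n D (tripOpponents opp loc i s))
      = ∑ d ∈ Icc s (s + tripLength loc i s), leg D opp loc i d := by
  have haway := (mem_tripStarts.mp hs).1
  have p₀ : position opp loc i s = i := position_of_mem_tripStarts hs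
  have p₁ : position opp loc i (s + 1) = oppOn opp i s := position_succ_of_away haway
  rw [tripOpponents_eq, tripLength]
  by_cases hhome : atHome loc i (s + 1)
  · have p₂ : position opp loc i (s + 1 + 1) = i := position_succ_of_atHome hhome
    rw [if_pos hhome, if_pos hhome, if_pos (card_singleton _), sum_singleton,
      show Icc s (s + 1) = {s, s + 1} by ext; simp; omega, sum_pair (by omega)]
    simp only [leg, p₀, p₁, p₂, hD.2.2.1 (oppOn opp i s) i]
  · have h₁ : atHome loc i (s + 1) = false := by simpa using hhome
    have hne := (oppOn_succ_ne hfeas h₁).symm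
    have p₂ : position opp loc i (s + 1 + 1) = oppOn opp i (s + 1) := position_succ_of_away h₁
    have p₃ : position opp loc i (s + 2 + 1) = i :=
      position_succ_of_atHome (atHome_add_two hfeas haway h₁)
    rw [if_neg hhome, if_neg hhome, if_neg (by rw [card_pair hne]; decide), sum_pair hne,
      blockWeight_pair hD hne, show Icc s (s + 2) = {s, s + 1, s + 2} by ext; simp; omega,
      sum_insert (by simp), sum_pair (by omega)]
    simp only [leg, p₀, p₁, p₂, p₃, hD.2.2.1 (oppOn opp i (s + 1)) i]
    ring

theorem patternCost_tripPattern_le_ttpTravel (hn : 2 ≤ n) (hfeas : ttpFeasible n opp loc)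
    (hD : isMetric n D) :
    patternCost n D i (tripPattern opp loc i) ≤ ttpTravel n D opp loc i := by
  have hinj : Set.InjOn (tripOpponents opp loc i) (tripStarts loc i) := fun s hs s' hs' h =>
    eq_of_mem_tripOpponents hfeas hs hs' oppOn_mem_tripOpponents
      (by rw [← h]; exact oppOn_mem_tripOpponents)
  have hdisj : (tripStarts loc i : Set ℕ).PairwiseDisjoint
      fun s => Icc s (s + tripLength loc i s) := fun s hs s' hs' hne =>
    Finset.disjoint_left.mpr fun d hd hd' => hne (eq_of_mem_trip_legs hs hs' hd hd')
  calc patternCost n D i (tripPattern opp loc i)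
      = ∑ s ∈ tripStarts loc i, ∑ d ∈ Icc s (s + tripLength loc i s),
          leg D opp loc i d := by
        rw [patternCost, tripPattern, sum_image hinj]
        exact sum_congr rfl fun s hs => tripCost_eq_sum_leg hfeas hD hs
    _ = ∑ d ∈ (tripStarts loc i).biUnion fun s => Icc s (s + tripLength loc i s),
          leg D opp loc i d := (sum_biUnion hdisj).symm
    _ ≤ ∑ d ∈ range (2*(n-1) + 1), leg D opp loc i d := by
        refine sum_le_sum_of_subset_of_nonneg (biUnion_subset.mpr fun s hs d hd => ?_)
          fun d _ _ => hD.2.1 _ _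
        have := add_tripLength_le hs
        rw [mem_range]
        rw [mem_Icc] at hd
        omega
    _ = ttpTravel n D opp loc i := (ttpTravel_eq_sum_leg hn).symm

end TTP

theorem total_ge_independent_lower_bound_general (n : ℕ) (hne : Even n)
    (D : Fin n → Fin n → ℝ) (hD : isMetric n D)
    (M : Finset (Finset (Fin n)))
    (hMmin : ∀ M' : Finset (Finset (Fin n)), isPairing n M' →
      pairingWeight n D M ≤ pairingWeight n D M')
    (opp : Fin (2*(n-1)) → Fin n → Fin n) (loc : Fin (2*(n-1)) → Fin n → Bool)
    (hfeas : ttpFeasible n opp loc) :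
    2 * sumDG n D + (n : ℝ) * pairingWeight n D M ≤ ttpTotal n D opp loc := by
  have hteam (i : Fin n) : sumDi n D i + pairingWeight n D M ≤ ttpTravel n D opp loc i := by
    have hn : 2 ≤ n := by
      obtain ⟨k, hk⟩ := hne
      have := i.pos
      omega
    obtain ⟨M', hM', hle⟩ := exists_isPairing_sumDi_add_pairingWeight_le hne hD
      (TTP.isPattern_tripPattern (i := i) hfeas)
    linarith [hMmin M' hM', TTP.patternCost_tripPattern_le_ttpTravel (i := i) hn hfeas hD]
  calc 2 * sumDG n D + (n : ℝ) * pairingWeight n D M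
      = ∑ i : Fin n, (sumDi n D i + pairingWeight n D M) := by
        simp only [sumDG, sumDi, sum_add_distrib, sum_const, card_univ, Fintype.card_fin,
          nsmul_eq_mul]
        ring
    _ ≤ ttpTotal n D opp loc := sum_le_sum fun i _ => hteam i

/-- The independent lower bound: the total distance of any feasible TTP-2
schedule is at least `LB = 2 * D_G + n * D_M`. -/
theorem total_ge_independent_lower_bound (n : ℕ) (hn : 4 ≤ n) (hne : Even n)
    (D : Fin n → Fin n → ℝ) (hD : isMetric n D)
    (M : Finset (Finset (Fin n))) (hM : isPairing n M)
    (hMmin : ∀ M' : Finset (Finset (Fin n)), isPairing n M' →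
      pairingWeight n D M ≤ pairingWeight n D M')
    (opp : Fin (2*(n-1)) → Fin n → Fin n) (loc : Fin (2*(n-1)) → Fin n → Bool)
    (hfeas : ttpFeasible n opp loc) :
    2 * sumDG n D + (n : ℝ) * pairingWeight n D M ≤ ttpTotal n D opp loc :=
  total_ge_independent_lower_bound_general n hne D hD M hMmin opp loc hfeas
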